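/- For each pair 1 ≤ i < j ≤ M define q_{ij}(x) = f_i(x)/(f_i(x)+f_j(x)) when f_i(x)+f_j(x) > 0 and q_{ij}(x) = 1/2 otherwise, and let S(x) = (q_{ij}(x))_{1 ≤ i < j ≤ M} ∈ [0,1]^{M(M−1)/2} be the vector of all pairwise model probabilities (one-to-one transformations of the pairwise Bayes factors). Then there exists a measurable function g : [0,1]^{M(M−1)/2} → ℝ^{M−1} such that g(S(x)) = T(x) for every x with Σ_{j=1}^M f_j(x) > 0; consequently S is Bayes sufficient for the model indicator. -/

import Mathlib

open MeasureTheory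

variable {X : Type*} [MeasurableSpace X]

/-- Posterior probability of model `i` given data `x`, under prior `p`:
`Pr_p(M_i | x) = p i * f i x / ∑ j, p j * f j x`. -/
noncomputable def post (M : ℕ) (f : Fin M → X → ℝ) (p : Fin M → ℝ) (i : Fin M) (x : X) : ℝ :=
  p i * f i x / ∑ j, p j * f j x

/-- Marginal data distribution `μ_p = ∑ i, p i • μ_i` under prior `p`, where `μ_i` has
density `f i` with respect to `ν`. -/
noncomputable def marg (ν : Measure X) (M : ℕ) (f : Fin M → X → ℝ) (p : Fin M → ℝ) :
    Measure X :=
  ∑ i, ENNReal.ofReal (p i) • ν.withDensity (fun x => ENNReal.ofReal (f i x))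

/-- The statistic `T(x) = (T_1(x), …, T_{M-1}(x))` with `T_i(x) = f i x / ∑ j, f j x`,
the posterior model probabilities under the uniform prior (first `M - 1` coordinates). -/
noncomputable def Tstat (M : ℕ) (f : Fin M → X → ℝ) (x : X) (i : Fin (M - 1)) : ℝ :=
  f (Fin.castLE (Nat.sub_le M 1) i) x / ∑ j, f j x

/-- `p` is a prior over the `M` models. -/
def IsPrior (M : ℕ) (p : Fin M → ℝ) : Prop :=
  (∀ i, 0 ≤ p i) ∧ ∑ i, p i = 1

/-- `S` is Bayes sufficient for the model indicator: for every prior `p` and every model `i`,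
the conditional expectation of `Pr_p(M_i | ·)` given `σ(S)` under `μ_p` equals
`Pr_p(M_i | ·)` `μ_p`-almost everywhere. -/
noncomputable def BayesSufficient (ν : Measure X) (M : ℕ) (f : Fin M → X → ℝ)
    {Y : Type*} [MeasurableSpace Y] (S : X → Y) : Prop :=
  ∀ p : Fin M → ℝ, IsPrior M p → ∀ i : Fin M,
    (marg ν M f p)[post M f p i|MeasurableSpace.comap S inferInstance]
      =ᵐ[marg ν M f p] post M f p i

/-- For each pair `i < j`, the pairwise posterior probability of model `i` versus model `j`
(a one-to-one transformation of the pairwise Bayes factor), with convention `1/2` when both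
densities vanish. -/
noncomputable def pairStat (M : ℕ) (f : Fin M → X → ℝ) (x : X)
    (ij : {q : Fin M × Fin M // q.1 < q.2}) : ℝ :=
  if 0 < f ij.1.1 x + f ij.1.2 x then f ij.1.1 x / (f ij.1.1 x + f ij.1.2 x) else 1 / 2

/-! Extend the pairwise probabilities to all ordered pairs by `q_kj = f_k / (f_k + f_j)`
(`1/2` if both vanish). Where `∑ f > 0`, `f_k > 0` exactly when every `q_kj` is positive, and
then the odds `(1 - q_kj) / q_kj = f_j / f_k` sum to `∑ f / f_k`, the reciprocal of `T_k`;
otherwise `T_k = 0`. This explicit formula is the measurable `g`. The posterior under any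
prior is unchanged by rescaling the likelihood vector, so it is a measurable function of `S`
on `{∑ f > 0}`, a set of full `μ_p`-measure because `μ_p ≪ ν`; being bounded it is integrable,
hence equal to its conditional expectation given `σ(S)`. -/

section PairwiseProbabilities

variable {M : ℕ} {Ω : Type*}

noncomputable def pairProb (q : {q : Fin M × Fin M // q.1 < q.2} → ℝ) (k j : Fin M) : ℝ :=
  if h : k < j then q ⟨(k, j), h⟩ else if h' : j < k then 1 - q ⟨(j, k), h'⟩ else 1 / 2

theorem measurable_pairProb (k j : Fin M) :
    Measurable fun q : {q : Fin M × Fin M // q.1 < q.2} → ℝ => pairProb q k j := by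
  unfold pairProb
  split_ifs <;> fun_prop

theorem pairProb_pairStat (f : Fin M → Ω → ℝ) (x : Ω) (k j : Fin M) :
    pairProb (pairStat M f x) k j =
      if 0 < f k x + f j x then f k x / (f k x + f j x) else 1 / 2 := by
  rcases lt_trichotomy k j with hkj | rfl | hjk
  · simp [pairProb, pairStat, hkj]
  · have hkk : pairProb (pairStat M f x) k k = 1 / 2 := by simp [pairProb]
    split_ifs with h
    · rw [hkk, ← two_mul, div_mul_cancel_right₀ (by linarith), one_div]
    · exact hkk
  · simp only [pairProb, pairStat, dif_neg (not_lt.2 hjk.le), dif_pos hjk, add_comm (f j x)]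
    split_ifs with h
    · field_simp
      ring
    · norm_num

variable {f : Fin M → Ω → ℝ} {x : Ω}

theorem forall_pairProb_pairStat_pos_iff (hf : ∀ i, 0 ≤ f i x) (hx : 0 < ∑ j, f j x)
    (k : Fin M) : (∀ j, 0 < pairProb (pairStat M f x) k j) ↔ 0 < f k x := by
  refine ⟨fun hpos => ?_, fun hk j => ?_⟩
  · by_contra hk
    have hk0 : f k x = 0 := le_antisymm (not_lt.1 hk) (hf k)
    obtain ⟨j, -, hj⟩ := Finset.exists_lt_of_sum_lt (s := Finset.univ) (f := fun _ => (0 : ℝ))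
      (by simpa using hx)
    have := hpos j
    rw [pairProb_pairStat, if_pos (by linarith), hk0, zero_div] at this
    exact lt_irrefl 0 this
  · have hs : 0 < f k x + f j x := by linarith [hf j]
    rw [pairProb_pairStat, if_pos hs]
    exact div_pos hk hs

theorem odds_pairProb_pairStat (hf : ∀ i, 0 ≤ f i x) {k : Fin M} (hk : 0 < f k x) (j : Fin M) :
    (1 - pairProb (pairStat M f x) k j) / pairProb (pairStat M f x) k j = f j x / f k x := by
  have hs : 0 < f k x + f j x := by linarith [hf j]
  rw [pairProb_pairStat, if_pos hs]
  field_simp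
  ring

noncomputable def posteriorOfPairProbs (q : {q : Fin M × Fin M // q.1 < q.2} → ℝ) (k : Fin M) :
    ℝ :=
  if ∀ j, 0 < pairProb q k j then (∑ j, (1 - pairProb q k j) / pairProb q k j)⁻¹ else 0

theorem measurable_posteriorOfPairProbs (k : Fin M) :
    Measurable fun q : {q : Fin M × Fin M // q.1 < q.2} → ℝ => posteriorOfPairProbs q k := by
  have hpos : MeasurableSet {q | ∀ j, 0 < pairProb q k j} := by
    simp only [Set.ofPred_forall]
    exact .iInter fun j => measurableSet_lt measurable_const (measurable_pairProb k j)
  have := measurable_pairProb (M := M)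
  exact Measurable.ite hpos (by fun_prop) measurable_const

theorem posteriorOfPairProbs_pairStat (hf : ∀ i, 0 ≤ f i x) (hx : 0 < ∑ j, f j x) (k : Fin M) :
    posteriorOfPairProbs (pairStat M f x) k = f k x / ∑ j, f j x := by
  unfold posteriorOfPairProbs
  split_ifs with hpos
  · have hk := (forall_pairProb_pairStat_pos_iff hf hx k).1 hpos
    simp only [odds_pairProb_pairStat hf hk, ← Finset.sum_div, inv_div]
  · rw [(forall_pairProb_pairStat_pos_iff hf hx k).not.1 hpos |> not_lt.1 |>.antisymm (hf k),
      zero_div]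

end PairwiseProbabilities

section Posterior

variable {M : ℕ} {Ω : Type*} {f : Fin M → Ω → ℝ} {p : Fin M → ℝ}

theorem abs_post_le_one (hp : ∀ j, 0 ≤ p j) (hf : ∀ j x, 0 ≤ f j x) (i : Fin M) (x : Ω) :
    |post M f p i x| ≤ 1 := by
  have hterm : ∀ j, 0 ≤ p j * f j x := fun j => mul_nonneg (hp j) (hf j x)
  have hsum : 0 ≤ ∑ j, p j * f j x := Finset.sum_nonneg fun j _ => hterm j
  rw [post, abs_of_nonneg (div_nonneg (hterm i) hsum)]
  exact div_le_one_of_le₀ (Finset.single_le_sum (fun j _ => hterm j) (Finset.mem_univ i)) hsum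

theorem post_eq_of_forall_eq_mul {Y : Type*} {g : Fin M → Y → ℝ} {y : Y} {x : Ω} {c : ℝ}
    (hc : c ≠ 0) (h : ∀ j, g j y = c * f j x) (i : Fin M) :
    post M g p i y = post M f p i x := by
  simp only [post, h, mul_left_comm (p _) c, ← Finset.mul_sum, mul_div_mul_left _ _ hc]

end Posterior

section Measurability

variable {M : ℕ} {f : Fin M → X → ℝ} {p : Fin M → ℝ}

theorem measurable_pairStat (hf : ∀ i, Measurable (f i)) : Measurable (pairStat M f) :=
  measurable_pi_lambda _ fun _ => Measurable.ite
    (measurableSet_lt measurable_const ((hf _).add (hf _))) ((hf _).div ((hf _).add (hf _)))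
    measurable_const

theorem measurable_post (hf : ∀ i, Measurable (f i)) (i : Fin M) : Measurable (post M f p i) := by
  unfold post
  fun_prop

theorem integrable_post {μ : Measure X} [IsFiniteMeasure μ] (hp : ∀ j, 0 ≤ p j)
    (hf_meas : ∀ j, Measurable (f j)) (hf_nonneg : ∀ j x, 0 ≤ f j x) (i : Fin M) :
    Integrable (post M f p i) μ :=
  .of_bound (measurable_post hf_meas i).aestronglyMeasurable 1
    (.of_forall (abs_post_le_one hp hf_nonneg i))

end Measurability

section Marginal

variable {ν : Measure X} {M : ℕ} {f : Fin M → X → ℝ} {p : Fin M → ℝ}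

theorem marg_absolutelyContinuous : marg ν M f p ≪ ν := by
  rw [marg, ← Measure.sum_fintype]
  exact Measure.absolutelyContinuous_sum_left fun i =>
    (withDensity_absolutelyContinuous ν _).smul_left _

theorem isFiniteMeasure_marg (hf : ∀ i, Integrable (f i) ν) : IsFiniteMeasure (marg ν M f p) := by
  have := fun i => isFiniteMeasure_withDensity_ofReal (hf i).hasFiniteIntegral
  have := fun i => Measure.smul_finite (ν.withDensity fun x => ENNReal.ofReal (f i x))
    (ENNReal.ofReal_ne_top (r := p i))
  rw [marg]
  infer_instance

end Marginal

theorem condExp_comap_ae_eq_of_ae_eq_comp {Y E : Type*} [MeasurableSpace Y]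
    [NormedAddCommGroup E] [NormedSpace ℝ E] [CompleteSpace E] {μ : Measure X} [IsFiniteMeasure μ]
    {S : X → Y} (hS : Measurable S) {F : X → E} {h : Y → E} (hh : StronglyMeasurable h)
    (hF : Integrable F μ) (hFh : F =ᵐ[μ] h ∘ S) :
    μ[F | MeasurableSpace.comap S inferInstance] =ᵐ[μ] F :=
  condExp_of_aestronglyMeasurable' hS.comap_le
    ⟨h ∘ S, hh.comp_measurable (comap_measurable S), hFh⟩ hF

theorem pairStat_bayesSufficient_general
    (ν : Measure X) (M : ℕ)
    (f : Fin M → X → ℝ) (hf_meas : ∀ i, Measurable (f i))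
    (hf_nonneg : ∀ i x, 0 ≤ f i x) (hf_one : ∀ i, ∫ x, f i x ∂ν = 1)
    (hf_pos : ∀ᵐ x ∂ν, 0 < ∑ j, f j x) :
    (∃ g : ({q : Fin M × Fin M // q.1 < q.2} → ℝ) → Fin (M - 1) → ℝ,
        Measurable g ∧ ∀ x : X, 0 < ∑ j, f j x → g (pairStat M f x) = Tstat M f x) ∧
      BayesSufficient ν M f (pairStat M f) := by
  have hT (x : X) (hx : 0 < ∑ j, f j x) (k : Fin M) :
      posteriorOfPairProbs (pairStat M f x) k = f k x / ∑ j, f j x :=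
    posteriorOfPairProbs_pairStat (hf_nonneg · x) hx k
  refine ⟨⟨fun q i => posteriorOfPairProbs q (Fin.castLE (Nat.sub_le M 1) i),
    measurable_pi_lambda _ fun i => measurable_posteriorOfPairProbs _,
    fun x hx => funext fun i => hT x hx _⟩, fun p hp i => ?_⟩
  have : IsFiniteMeasure (marg ν M f p) := isFiniteMeasure_marg fun i =>
    .of_integral_ne_zero (f := f i) (by rw [hf_one i]; exact one_ne_zero)
  refine condExp_comap_ae_eq_of_ae_eq_comp (measurable_pairStat hf_meas)
    (measurable_post (p := p) measurable_posteriorOfPairProbs i).stronglyMeasurable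
    (integrable_post hp.1 hf_meas hf_nonneg i) ?_
  filter_upwards [marg_absolutelyContinuous.ae_le hf_pos] with x hx
  refine (post_eq_of_forall_eq_mul (inv_ne_zero hx.ne') (fun j => ?_) i).symm
  rw [hT x hx, div_eq_inv_mul]

/-- The vector `S(x) = (q_{ij}(x))_{i<j}` of all pairwise model probabilities determines
`T(x)` (wherever `∑ j, f j x > 0`) via a measurable map `g`, and consequently `S` is Bayes
sufficient for the model indicator. -/
theorem pairStat_bayesSufficient
    (ν : Measure X) [SigmaFinite ν] (M : ℕ) (hM : 2 ≤ M)
    (f : Fin M → X → ℝ) (hf_meas : ∀ i, Measurable (f i))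
    (hf_nonneg : ∀ i x, 0 ≤ f i x) (hf_one : ∀ i, ∫ x, f i x ∂ν = 1)
    (hf_pos : ∀ᵐ x ∂ν, 0 < ∑ j, f j x) :
    (∃ g : ({q : Fin M × Fin M // q.1 < q.2} → ℝ) → Fin (M - 1) → ℝ,
        Measurable g ∧ ∀ x : X, 0 < ∑ j, f j x → g (pairStat M f x) = Tstat M f x) ∧
      BayesSufficient ν M f (pairStat M f) :=
  pairStat_bayesSufficient_general ν M f hf_meas hf_nonneg hf_one hf_pos
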